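/- arXiv:2512.00620 — 4 statements merged into one kernel-verified Lean document; each statement's English description precedes it below -/
import Mathlib

section
/- If there exists a compact h-set, i.e., a nonempty compact set Γ ⊂ ℝ^k and a finite Borel measure μ with support Γ such that c⁻¹ h(t) ≤ μ(B_t(x)) ≤ c h(t) for all x ∈ Γ and t ∈ (0,1] (balls in the sup-norm), then the function h satisfies the doubling condition: there exists b > 0 such that h(2t) ≤ b·h(t) for all 0 < t ≤ 1/2. -/
/-!
Fix `x₀ ∈ Γ`. In the sup norm, the ball `B_{2t}(x₀)` is covered by `4^k` balls of radius `t/2`;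
each of them that meets `Γ = supp μ` lies in a ball `B_t(w)` with `w ∈ Γ`, and `μ` does not charge
the complement of its support. Hence `c⁻¹ h(2t) ≤ μ(B_{2t}(x₀)) ≤ 4^k c h(t)`.
-/

open MeasureTheory Metric Set

lemma exists_fin_abs_sub_le {n : ℕ} (hn : 0 < n) {s u : ℝ} (hs : 0 < s) (hu₀ : 0 ≤ u)
    (hu : u ≤ 2 * n * s) : ∃ j : Fin n, |u - (2 * j + 1) * s| ≤ s := by
  have h2s : 0 < 2 * s := by positivity
  have hfloor_le : ⌊u / (2 * s)⌋₊ * (2 * s) ≤ u :=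
    (le_div_iff₀ h2s).mp (Nat.floor_le (div_nonneg hu₀ h2s.le))
  have hlt_floor : u < (⌊u / (2 * s)⌋₊ + 1) * (2 * s) :=
    (div_lt_iff₀ h2s).mp (Nat.lt_floor_add_one _)
  by_cases hm : ⌊u / (2 * s)⌋₊ < n
  · exact ⟨⟨_, hm⟩, abs_le.mpr ⟨by linarith, by linarith⟩⟩
  · have hnm : (n : ℝ) ≤ u / (2 * s) :=
      (Nat.le_floor_iff (div_nonneg hu₀ h2s.le)).mp (not_lt.mp hm)
    rw [le_div_iff₀ h2s] at hnm
    refine ⟨⟨n - 1, Nat.sub_lt hn one_pos⟩, abs_le.mpr ⟨?_, ?_⟩⟩ <;>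
    · simp only [Nat.cast_pred hn]
      linarith

lemma closedBall_subset_iUnion_closedBall_pi {ι : Type*} [Fintype ι] (x : ι → ℝ) {n : ℕ}
    (hn : 0 < n) {s : ℝ} (hs : 0 < s) :
    closedBall x (n * s) ⊆
      ⋃ z : ι → Fin n, closedBall (fun i ↦ x i - n * s + (2 * z i + 1) * s) s := by
  intro y hy
  have hcoord (i : ι) : ∃ j : Fin n, |(y i - x i + n * s) - (2 * j + 1) * s| ≤ s := by
    have := abs_le.mp ((dist_le_pi_dist y x i).trans (mem_closedBall.mp hy))
    exact exists_fin_abs_sub_le hn hs (by linarith [this.1]) (by linarith [this.2])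
  choose z hz using hcoord
  refine mem_iUnion.mpr ⟨z, (dist_pi_le_iff hs.le).mpr fun i ↦ ?_⟩
  rw [Real.dist_eq]
  convert hz i using 2
  ring

lemma measure_closedBall_inter_le {X : Type*} [PseudoMetricSpace X] [MeasurableSpace X]
    {μ : Measure X} {Γ : Set X} {s : ℝ} {M : ENNReal}
    (hM : ∀ w ∈ Γ, μ (closedBall w (2 * s)) ≤ M) (y : X) :
    μ (closedBall y s ∩ Γ) ≤ M := by
  rcases (closedBall y s ∩ Γ).eq_empty_or_nonempty with hempty | ⟨w, hwy, hwΓ⟩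
  · simp [hempty]
  · refine (measure_mono (inter_subset_left.trans ?_)).trans (hM w hwΓ)
    exact closedBall_subset_closedBall' (by rw [dist_comm]; linarith [mem_closedBall.mp hwy])

lemma measure_le_card_mul_of_subset_iUnion_closedBall {X β : Type*} [PseudoMetricSpace X]
    [MeasurableSpace X] [Fintype β] {μ : Measure X} {Γ S : Set X} (hΓ : μ Γᶜ = 0)
    {p : β → X} {s : ℝ} (hS : S ⊆ ⋃ z, closedBall (p z) s) {M : ENNReal}
    (hM : ∀ w ∈ Γ, μ (closedBall w (2 * s)) ≤ M) :
    μ S ≤ Fintype.card β * M := calc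
  μ S = μ (S ∩ Γ) := (measure_inter_conull hΓ).symm
  _ ≤ μ (⋃ z, closedBall (p z) s ∩ Γ) := by
    rw [← iUnion_inter]
    exact measure_mono (inter_subset_inter_left _ hS)
  _ ≤ ∑ z, μ (closedBall (p z) s ∩ Γ) := measure_iUnion_fintype_le _ _
  _ ≤ ∑ _z : β, M := Finset.sum_le_sum fun z _ ↦ measure_closedBall_inter_le hM (p z)
  _ = Fintype.card β * M := by simp

theorem stmt0_general (k : ℕ) (h : ℝ → ℝ)
    (Γ : Set (Fin k → ℝ)) (hΓne : Γ.Nonempty)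
    (μ : Measure (Fin k → ℝ)) [IsFiniteMeasure μ]
    (hsupp : Γ = {x | ∀ ε > 0, 0 < μ (Metric.ball x ε)})
    (c : ℝ) (hc : 1 ≤ c)
    (hbound : ∀ x ∈ Γ, ∀ t ∈ Set.Ioc (0:ℝ) 1,
      c⁻¹ * h t ≤ (μ (Metric.closedBall x t)).toReal ∧
      (μ (Metric.closedBall x t)).toReal ≤ c * h t) :
    ∃ b > 0, ∀ t : ℝ, 0 < t → t ≤ 1/2 → h (2*t) ≤ b * h t := by
  obtain ⟨x₀, hx₀⟩ := hΓne
  have hΓ : μ Γᶜ = 0 := by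
    rw [hsupp.trans (ext fun x ↦ nhds_basis_ball.mem_measureSupport.symm)]
    exact Measure.measure_compl_support
  refine ⟨4 ^ k * c ^ 2, by positivity, fun t ht ht2 ↦ ?_⟩
  have hcht : 0 ≤ c * h t :=
    ENNReal.toReal_nonneg.trans (hbound x₀ hx₀ t ⟨ht, by linarith⟩).2
  have hsmall : ∀ w ∈ Γ, μ (closedBall w (2 * (t / 2))) ≤ ENNReal.ofReal (c * h t) := by
    intro w hw
    rw [mul_div_cancel₀ t two_ne_zero, ENNReal.le_ofReal_iff_toReal_le (measure_ne_top _ _) hcht]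
    exact (hbound w hw t ⟨ht, by linarith⟩).2
  have hcover := closedBall_subset_iUnion_closedBall_pi x₀ (n := 4) four_pos (half_pos ht)
  have hlarge : μ (closedBall x₀ (2 * t)) ≤ ENNReal.ofReal (4 ^ k * (c * h t)) := by
    convert measure_le_card_mul_of_subset_iUnion_closedBall hΓ hcover hsmall using 2
    · congr 1; push_cast; ring
    · rw [ENNReal.ofReal_mul (by positivity)]
      simp
  have hlower := (hbound x₀ hx₀ (2 * t) ⟨by positivity, by linarith⟩).1
  have hdouble := hlower.trans (ENNReal.toReal_le_of_le_ofReal (by positivity) hlarge)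
  rw [inv_mul_le_iff₀ (by positivity)] at hdouble
  linarith

theorem stmt0 (k : ℕ) (h : ℝ → ℝ)
    (hpos : ∀ t ∈ Set.Ioc (0:ℝ) 1, 0 < h t)
    (hmono : ∀ s t : ℝ, s ∈ Set.Ioc (0:ℝ) 1 → t ∈ Set.Ioc (0:ℝ) 1 → s ≤ t → h s ≤ h t)
    (Γ : Set (Fin k → ℝ)) (hΓne : Γ.Nonempty) (hΓc : IsCompact Γ)
    (μ : Measure (Fin k → ℝ)) [IsFiniteMeasure μ]
    (hsupp : Γ = {x | ∀ ε > 0, 0 < μ (Metric.ball x ε)})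
    (c : ℝ) (hc : 1 ≤ c)
    (hbound : ∀ x ∈ Γ, ∀ t ∈ Set.Ioc (0:ℝ) 1,
      c⁻¹ * h t ≤ (μ (Metric.closedBall x t)).toReal ∧
      (μ (Metric.closedBall x t)).toReal ≤ c * h t) :
    ∃ b > 0, ∀ t : ℝ, 0 < t → t ≤ 1/2 → h (2*t) ≤ b * h t :=
  stmt0_general k h Γ hΓne μ hsupp c hc hbound
end

section
/- Let ({\cal T}, ξ₀) be a rooted tree, 1 ≤ p ≤ q < ∞, g, v : V(T) → ℝ₊ weight functions, and suppose there exist a > 0, b > 0 such that for every vertex ξ and every j ≥ 0, ∑_{η ∈ V_j(ξ)} v(η)^q ≤ b·2^{-aj}·v(ξ)^q, where V_j(ξ) is the set of descendants of ξ at distance exactly j. Then the weighted summation operator S_{g,v}f(ξ) = v(ξ)·∑_{ξ' ≤ ξ} g(ξ')f(ξ') satisfies the bound ‖S_{g,v}‖_{ℓ^p → ℓ^q} ≤ C(a,b,p,q)·sup_{ξ ∈ V(T)} g(ξ)v(ξ). -/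
open ENNReal

/-!
With `s = 2 ^ (-a / q) < 1`, Hölder's inequality with the geometric weights `s ^ d` (`d` the
distance from `ξ` to its ancestor `η`) gives
`(S f ξ) ^ q ≤ (1 - s) ^ (1 - q) * ∑_η s ^ (d * (1 - q)) * (v ξ * g η * f η) ^ q`.
Summing over `ξ` and regrouping by the ancestor `η` and the distance `j`, the decay hypothesis
`∑_{ξ ∈ V_j(η)} v ξ ^ q ≤ b * s ^ (j * q) * v η ^ q` leaves only the geometric series `∑_j s ^ j`,
so `‖S f‖_q ≤ (1 - s)⁻¹ * b ^ (1 / q) * sup (g * v) * ‖f‖_q`, and `‖f‖_q ≤ ‖f‖_p` since `p ≤ q`.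
-/

namespace ENNReal

variable {ι : Type*}

theorem rpow_sub_one_mul_self {r : ℝ} (hr : 1 ≤ r) (x : ℝ≥0∞) : x ^ (r - 1) * x = x ^ r := by
  nth_rw 2 [← rpow_one x]
  rw [← rpow_add_of_nonneg _ _ (sub_nonneg.mpr hr) zero_le_one, sub_add_cancel]

theorem tsum_mul_le_weight_mul_Lp {p : ℝ} (hp : 1 ≤ p) (w f : ι → ℝ≥0∞) :
    ∑' i, w i * f i ≤ (∑' i, w i) ^ (1 - p⁻¹) * (∑' i, w i * f i ^ p) ^ p⁻¹ := by
  refine ENNReal.summable.tsum_le_of_sum_le fun s => ?_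
  refine (inner_le_weight_mul_Lp_of_nonneg s hp w f).trans ?_
  gcongr
  · simpa using inv_le_one_of_one_le₀ hp
  · exact ENNReal.sum_le_tsum s
  · exact ENNReal.sum_le_tsum s

theorem rpow_tsum_mul_le {q : ℝ} (hq : 1 ≤ q) (w f : ι → ℝ≥0∞) :
    (∑' i, w i * f i) ^ q ≤ (∑' i, w i) ^ (q - 1) * ∑' i, w i * f i ^ q := by
  have hq₀ : 0 < q := zero_lt_one.trans_le hq
  calc (∑' i, w i * f i) ^ q
      ≤ ((∑' i, w i) ^ (1 - q⁻¹) * (∑' i, w i * f i ^ q) ^ q⁻¹) ^ q := by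
        gcongr; exact tsum_mul_le_weight_mul_Lp hq w f
    _ = (∑' i, w i) ^ (q - 1) * ∑' i, w i * f i ^ q := by
        rw [mul_rpow_of_nonneg _ _ hq₀.le, ← rpow_mul, ← rpow_mul, inv_mul_cancel₀ hq₀.ne',
          rpow_one, sub_mul, one_mul, inv_mul_cancel₀ hq₀.ne']

theorem tsum_rpow_le_rpow_tsum {r : ℝ} (hr : 1 ≤ r) (x : ι → ℝ≥0∞) :
    ∑' i, x i ^ r ≤ (∑' i, x i) ^ r := by
  calc ∑' i, x i ^ r = ∑' i, x i ^ (r - 1) * x i := by simp_rw [rpow_sub_one_mul_self hr]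
    _ ≤ ∑' i, (∑' j, x j) ^ (r - 1) * x i := by
        gcongr with i; exact ENNReal.le_tsum i
    _ = (∑' i, x i) ^ r := by rw [ENNReal.tsum_mul_left, rpow_sub_one_mul_self hr]

theorem rpow_tsum_rpow_le_of_le {p q : ℝ} (hp : 0 < p) (hpq : p ≤ q) (f : ι → ℝ≥0∞) :
    (∑' i, f i ^ q) ^ (1 / q) ≤ (∑' i, f i ^ p) ^ (1 / p) := by
  have hq : 0 < q := hp.trans_le hpq
  calc (∑' i, f i ^ q) ^ (1 / q) = (∑' i, (f i ^ p) ^ (q / p)) ^ (1 / q) := by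
        simp_rw [← rpow_mul, mul_div_cancel₀ q hp.ne']
    _ ≤ ((∑' i, f i ^ p) ^ (q / p)) ^ (1 / q) := by
        gcongr; exact tsum_rpow_le_rpow_tsum ((one_le_div hp).mpr hpq) _
    _ = (∑' i, f i ^ p) ^ (1 / p) := by
        rw [← rpow_mul]; congr 1; field_simp

theorem tsum_tsum_pow_mul_rpow_div_pow_le {q : ℝ} (hq : 0 ≤ q) {s β : ℝ≥0∞} (hs0 : s ≠ 0)
    (hs : s ≠ ∞) (D : ℕ → Set ι) (v : ι → ℝ≥0∞) (c a : ℝ≥0∞)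
    (hv : ∀ j, ∑' ξ : D j, v ξ ^ q ≤ β * (s ^ j) ^ q * a ^ q) :
    ∑' j, ∑' ξ : D j, s ^ j * (v ξ * c / s ^ j) ^ q ≤ (1 - s)⁻¹ * β * (a * c) ^ q := by
  have hj (j : ℕ) : ∑' ξ : D j, s ^ j * (v ξ * c / s ^ j) ^ q ≤ s ^ j * (β * (a * c) ^ q) := by
    have hsjq : (s ^ j) ^ q ≠ 0 := by simp [hs0, hs]
    have hsjq' : (s ^ j) ^ q ≠ ∞ := by simp [hs0, hs]
    calc ∑' ξ : D j, s ^ j * (v ξ * c / s ^ j) ^ q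
        = s ^ j * (c ^ q / (s ^ j) ^ q) * ∑' ξ : D j, v ξ ^ q := by
          rw [← ENNReal.tsum_mul_left]
          refine tsum_congr fun ξ => ?_
          rw [div_rpow_of_nonneg _ _ hq, mul_rpow_of_nonneg _ _ hq, div_eq_mul_inv,
            div_eq_mul_inv]
          ring
      _ ≤ s ^ j * (c ^ q / (s ^ j) ^ q) * (β * (s ^ j) ^ q * a ^ q) := by gcongr; exact hv j
      _ = s ^ j * (β * (a * c) ^ q) := by
          rw [mul_rpow_of_nonneg _ _ hq, ENNReal.div_eq_inv_mul]
          calc _ = s ^ j * (β * (a ^ q * c ^ q)) * (((s ^ j) ^ q)⁻¹ * (s ^ j) ^ q) := by ring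
            _ = _ := by rw [ENNReal.inv_mul_cancel hsjq hsjq', mul_one]
  calc ∑' j, ∑' ξ : D j, s ^ j * (v ξ * c / s ^ j) ^ q
      ≤ ∑' j : ℕ, s ^ j * (β * (a * c) ^ q) := ENNReal.tsum_le_tsum hj
    _ = (1 - s)⁻¹ * β * (a * c) ^ q := by
        rw [ENNReal.tsum_mul_right, ENNReal.tsum_geometric, mul_assoc]

end ENNReal

section RootedTree

variable {V : Type*}

def ancestors (parent : V → V) (ξ : V) : Set V := {η | ∃ n : ℕ, parent^[n] ξ = η}

def descendantsAt (parent : V → V) (depth : V → ℕ) (η : V) (j : ℕ) : Set V :=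
  {ξ | parent^[j] ξ = η ∧ depth ξ = depth η + j}

variable {root : V} {parent : V → V} {depth : V → ℕ}

theorem depth_iterate_add (hdepth0 : depth root = 0)
    (hdepth : ∀ w : V, w ≠ root → depth w = depth (parent w) + 1) {k : ℕ} {ξ : V}
    (hk : k ≤ depth ξ) : depth (parent^[k] ξ) + k = depth ξ := by
  induction k generalizing ξ with
  | zero => rfl
  | succ k ih =>
    have hξ : ξ ≠ root := by rintro rfl; omega
    have hstep := hdepth ξ hξ
    have := ih (ξ := parent ξ) (by omega)
    rw [Function.iterate_succ_apply]
    omega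

theorem iterate_depth_eq_root (hdepth0 : depth root = 0)
    (hdepth : ∀ w : V, w ≠ root → depth w = depth (parent w) + 1) (ξ : V) :
    parent^[depth ξ] ξ = root := by
  by_contra h
  have := depth_iterate_add hdepth0 hdepth le_rfl (ξ := ξ)
  have := hdepth _ h
  omega

theorem iterate_depth_sub_of_mem_ancestors (hroot : parent root = root)
    (hdepth0 : depth root = 0) (hdepth : ∀ w : V, w ≠ root → depth w = depth (parent w) + 1)
    {ξ η : V} (hη : η ∈ ancestors parent ξ) :
    depth η ≤ depth ξ ∧ parent^[depth ξ - depth η] ξ = η := by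
  obtain ⟨n, rfl⟩ := hη
  rcases le_total n (depth ξ) with hn | hn
  · have := depth_iterate_add hdepth0 hdepth hn
    exact ⟨by omega, by rw [show depth ξ - depth (parent^[n] ξ) = n by omega]⟩
  · -- beyond depth `ξ` the iterates are stuck at the root
    have hroot_n : parent^[n] ξ = root := by
      rw [← Nat.sub_add_cancel hn, Function.iterate_add_apply,
        iterate_depth_eq_root hdepth0 hdepth, Function.iterate_fixed hroot]
    rw [hroot_n, hdepth0, Nat.sub_zero]
    exact ⟨Nat.zero_le _, iterate_depth_eq_root hdepth0 hdepth ξ⟩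

theorem tsum_ancestors_pow_depth_sub_le (hroot : parent root = root)
    (hdepth0 : depth root = 0) (hdepth : ∀ w : V, w ≠ root → depth w = depth (parent w) + 1)
    (ξ : V) (s : ℝ≥0∞) :
    ∑' η : ancestors parent ξ, s ^ (depth ξ - depth (η : V)) ≤ (1 - s)⁻¹ := by
  have hinj : Function.Injective fun η : ancestors parent ξ => depth ξ - depth (η : V) := by
    intro η η' h
    rw [Subtype.ext_iff, ← (iterate_depth_sub_of_mem_ancestors hroot hdepth0 hdepth η.2).2,
      ← (iterate_depth_sub_of_mem_ancestors hroot hdepth0 hdepth η'.2).2]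
    exact congrArg (parent^[·] ξ) h
  rw [← ENNReal.tsum_geometric]
  exact tsum_comp_le_tsum_of_injective hinj (s ^ ·)

def ancestorsSigmaEquiv (hroot : parent root = root) (hdepth0 : depth root = 0)
    (hdepth : ∀ w : V, w ≠ root → depth w = depth (parent w) + 1) :
    (Σ ξ : V, ancestors parent ξ) ≃ Σ η : V, Σ j : ℕ, descendantsAt parent depth η j where
  toFun x := ⟨x.2, depth x.1 - depth x.2, x.1,
    (iterate_depth_sub_of_mem_ancestors hroot hdepth0 hdepth x.2.2).2,
    by have := (iterate_depth_sub_of_mem_ancestors hroot hdepth0 hdepth x.2.2).1; omega⟩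
  invFun y := ⟨y.2.2, y.1, y.2.1, y.2.2.2.1⟩
  left_inv _ := rfl
  right_inv := by
    rintro ⟨η, j, ξ, hξ, hd⟩
    obtain rfl : depth ξ - depth η = j := by omega
    rfl

theorem tsum_ancestors_eq_tsum_descendantsAt (hroot : parent root = root)
    (hdepth0 : depth root = 0) (hdepth : ∀ w : V, w ≠ root → depth w = depth (parent w) + 1)
    (F : V → V → ℕ → ℝ≥0∞) :
    ∑' ξ, ∑' η : ancestors parent ξ, F ξ η (depth ξ - depth (η : V)) =
      ∑' η, ∑' j : ℕ, ∑' ξ : descendantsAt parent depth η j, F ξ η j := by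
  calc _ = ∑' x : Σ ξ : V, ancestors parent ξ, F x.1 x.2 (depth x.1 - depth (x.2 : V)) :=
        (ENNReal.tsum_sigma' _).symm
    _ = ∑' y : Σ η : V, Σ j : ℕ, descendantsAt parent depth η j, F y.2.2 y.1 y.2.1 :=
        (ancestorsSigmaEquiv hroot hdepth0 hdepth).tsum_eq fun y => F y.2.2 y.1 y.2.1
    _ = _ := by
        rw [ENNReal.tsum_sigma']
        exact tsum_congr fun η => ENNReal.tsum_sigma' _

theorem rpow_tsum_ancestors_le (hroot : parent root = root)
    (hdepth0 : depth root = 0) (hdepth : ∀ w : V, w ≠ root → depth w = depth (parent w) + 1)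
    {q : ℝ} (hq : 1 ≤ q) {s : ℝ≥0∞} (hs0 : s ≠ 0) (hs : s ≠ ∞) (x : V → ℝ≥0∞) (ξ : V) :
    (∑' η : ancestors parent ξ, x η) ^ q ≤
      (1 - s)⁻¹ ^ (q - 1) * ∑' η : ancestors parent ξ,
        s ^ (depth ξ - depth (η : V)) * (x η / s ^ (depth ξ - depth (η : V))) ^ q := by
  have hx (η : V) : s ^ (depth ξ - depth η) * (x η / s ^ (depth ξ - depth η)) = x η :=
    ENNReal.mul_div_cancel (pow_ne_zero _ hs0) (pow_ne_top hs)
  calc (∑' η : ancestors parent ξ, x η) ^ q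
      = (∑' η : ancestors parent ξ,
          s ^ (depth ξ - depth (η : V)) * (x η / s ^ (depth ξ - depth (η : V)))) ^ q := by
        simp_rw [hx]
    _ ≤ _ := ENNReal.rpow_tsum_mul_le hq _ _
    _ ≤ _ := by
        gcongr
        exact tsum_ancestors_pow_depth_sub_le hroot hdepth0 hdepth ξ s

theorem tsum_rpow_mul_tsum_ancestors_le (hroot : parent root = root)
    (hdepth0 : depth root = 0) (hdepth : ∀ w : V, w ≠ root → depth w = depth (parent w) + 1)
    {q : ℝ} (hq : 1 ≤ q) {s β : ℝ≥0∞} (hs0 : s ≠ 0) (hs1 : s < 1) (g v f : V → ℝ≥0∞)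
    (hv : ∀ η j, ∑' ξ : descendantsAt parent depth η j, v ξ ^ q ≤ β * (s ^ j) ^ q * v η ^ q) :
    ∑' ξ, (v ξ * ∑' η : ancestors parent ξ, g η * f η) ^ q ≤
      (1 - s)⁻¹ ^ q * β * ∑' η, (v η * (g η * f η)) ^ q := by
  have hq₀ : 0 ≤ q := zero_le_one.trans hq
  set U := (1 - s)⁻¹
  calc ∑' ξ, (v ξ * ∑' η : ancestors parent ξ, g η * f η) ^ q
      = ∑' ξ, (∑' η : ancestors parent ξ, v ξ * (g η * f η)) ^ q := by
        simp_rw [ENNReal.tsum_mul_left]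
    _ ≤ ∑' ξ, U ^ (q - 1) * ∑' η : ancestors parent ξ, s ^ (depth ξ - depth (η : V)) *
          (v ξ * (g η * f η) / s ^ (depth ξ - depth (η : V))) ^ q :=
        ENNReal.tsum_le_tsum fun ξ =>
          rpow_tsum_ancestors_le hroot hdepth0 hdepth hq hs0 hs1.ne_top
            (fun η => v ξ * (g η * f η)) ξ
    _ = U ^ (q - 1) * ∑' η, ∑' j : ℕ, ∑' ξ : descendantsAt parent depth η j,
          s ^ j * (v ξ * (g η * f η) / s ^ j) ^ q := by
        rw [ENNReal.tsum_mul_left, tsum_ancestors_eq_tsum_descendantsAt hroot hdepth0 hdepth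
          fun ξ η j => s ^ j * (v ξ * (g η * f η) / s ^ j) ^ q]
    _ ≤ U ^ (q - 1) * ∑' η, U * β * (v η * (g η * f η)) ^ q := by
        gcongr with η
        exact ENNReal.tsum_tsum_pow_mul_rpow_div_pow_le hq₀ hs0 hs1.ne_top _ v _ _ (hv η)
    _ = U ^ q * β * ∑' η, (v η * (g η * f η)) ^ q := by
        rw [ENNReal.tsum_mul_left, ← mul_assoc, ← mul_assoc, rpow_sub_one_mul_self hq]

theorem rpow_tsum_rpow_mul_tsum_ancestors_le (hroot : parent root = root)
    (hdepth0 : depth root = 0) (hdepth : ∀ w : V, w ≠ root → depth w = depth (parent w) + 1)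
    {q : ℝ} (hq : 1 ≤ q) {s β : ℝ≥0∞} (hs0 : s ≠ 0) (hs1 : s < 1) {g v : V → ℝ≥0∞}
    (hv : ∀ η j, ∑' ξ : descendantsAt parent depth η j, v ξ ^ q ≤ β * (s ^ j) ^ q * v η ^ q)
    {M : ℝ≥0∞} (hM : ∀ ξ, g ξ * v ξ ≤ M) (f : V → ℝ≥0∞) :
    (∑' ξ, (v ξ * ∑' η : ancestors parent ξ, g η * f η) ^ q) ^ (1 / q) ≤
      (1 - s)⁻¹ * β ^ (1 / q) * M * (∑' ξ, f ξ ^ q) ^ (1 / q) := by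
  have hq₀ : 0 < q := zero_lt_one.trans_le hq
  calc (∑' ξ, (v ξ * ∑' η : ancestors parent ξ, g η * f η) ^ q) ^ (1 / q)
      ≤ ((1 - s)⁻¹ ^ q * β * ∑' ξ, (M * f ξ) ^ q) ^ (1 / q) := by
        gcongr
        refine (tsum_rpow_mul_tsum_ancestors_le hroot hdepth0 hdepth hq hs0 hs1 g v f hv).trans ?_
        gcongr _ * ∑' η, ?_ ^ q with η
        rw [← mul_assoc, mul_comm (v η)]
        exact mul_le_mul_left (hM η) _
    _ = (1 - s)⁻¹ * β ^ (1 / q) * M * (∑' ξ, f ξ ^ q) ^ (1 / q) := by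
        simp_rw [mul_rpow_of_nonneg _ _ hq₀.le, ENNReal.tsum_mul_left,
          mul_rpow_of_nonneg _ _ (one_div_nonneg.mpr hq₀.le), ← rpow_mul,
          mul_one_div_cancel hq₀.ne', rpow_one]
        ring

end RootedTree

theorem stmt5_general {V : Type*} (root : V) (parent : V → V)
    (hroot : parent root = root)
    (depth : V → ℕ) (hdepth0 : depth root = 0)
    (hdepth : ∀ w : V, w ≠ root → depth w = depth (parent w) + 1)
    (p q : ℝ) (hp : 1 ≤ p) (hpq : p ≤ q)
    (g v : V → ℝ≥0∞)
    (a b : ℝ) (ha : 0 < a) (hb : 0 < b)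
    (hsum : ∀ ξ : V, ∀ j : ℕ,
      ∑' η : {η : V // parent^[j] η = ξ ∧ depth η = depth ξ + j}, v (η : V) ^ q
        ≤ ENNReal.ofReal (b * 2 ^ (-a * (j : ℝ))) * v ξ ^ q) :
    ∃ C > (0:ℝ), ∀ M : ℝ≥0∞, (∀ ξ : V, g ξ * v ξ ≤ M) →
      ∀ f : V → ℝ≥0∞,
        (∑' ξ : V, (v ξ * ∑' η : {η : V // ∃ n : ℕ, parent^[n] ξ = η}, g (η : V) * f (η : V)) ^ q)
            ^ (1/q)
          ≤ ENNReal.ofReal C * M * (∑' ξ : V, f ξ ^ p) ^ (1/p) := by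
  have hq : 1 ≤ q := hp.trans hpq
  set s := ENNReal.ofReal (2 ^ (-a / q))
  have hs0 : s ≠ 0 := by simpa [s] using Real.rpow_pos_of_pos two_pos _
  have hs1 : s < 1 := ofReal_lt_one.mpr <| Real.rpow_lt_one_of_one_lt_of_neg one_lt_two <|
    div_neg_of_neg_of_pos (neg_neg_of_pos ha) (by linarith)
  have hdecay (j : ℕ) :
      ENNReal.ofReal (b * 2 ^ (-a * (j : ℝ))) = ENNReal.ofReal b * (s ^ j) ^ q := by
    rw [ENNReal.ofReal_mul hb.le, ← ENNReal.ofReal_pow (by positivity),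
      ENNReal.ofReal_rpow_of_nonneg (by positivity) (by linarith), ← Real.rpow_natCast,
      ← Real.rpow_mul zero_le_two, ← Real.rpow_mul zero_le_two]
    congr 3
    field_simp
  set K := (1 - s)⁻¹ * ENNReal.ofReal b ^ (1 / q)
  have hK : K ≠ ∞ := mul_ne_top (inv_ne_top.mpr (tsub_pos_of_lt hs1).ne')
    (rpow_ne_top_of_nonneg (by positivity) ofReal_ne_top)
  refine ⟨K.toReal + 1, by positivity, fun M hM f => ?_⟩
  calc _ ≤ K * M * (∑' ξ, f ξ ^ q) ^ (1 / q) :=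
        rpow_tsum_rpow_mul_tsum_ancestors_le hroot hdepth0 hdepth hq hs0 hs1
          (fun ξ j => by rw [← hdecay j]; exact hsum ξ j) hM f
    _ ≤ K * M * (∑' ξ, f ξ ^ p) ^ (1 / p) := by
        gcongr
        exact ENNReal.rpow_tsum_rpow_le_of_le (by linarith) hpq f
    _ ≤ ENNReal.ofReal (K.toReal + 1) * M * (∑' ξ, f ξ ^ p) ^ (1 / p) := by
        gcongr
        exact (ofReal_toReal hK).symm.le.trans (ofReal_le_ofReal (by linarith))

theorem stmt5 {V : Type*} (root : V) (parent : V → V)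
    (hroot : parent root = root)
    (hreach : ∀ w : V, ∃ n : ℕ, parent^[n] w = root)
    (depth : V → ℕ) (hdepth0 : depth root = 0)
    (hdepth : ∀ w : V, w ≠ root → depth w = depth (parent w) + 1)
    (p q : ℝ) (hp : 1 ≤ p) (hpq : p ≤ q)
    (g v : V → ℝ≥0∞)
    (a b : ℝ) (ha : 0 < a) (hb : 0 < b)
    (hsum : ∀ ξ : V, ∀ j : ℕ,
      ∑' η : {η : V // parent^[j] η = ξ ∧ depth η = depth ξ + j}, v (η : V) ^ q
        ≤ ENNReal.ofReal (b * 2 ^ (-a * (j : ℝ))) * v ξ ^ q) :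
    ∃ C > (0:ℝ), ∀ M : ℝ≥0∞, (∀ ξ : V, g ξ * v ξ ≤ M) →
      ∀ f : V → ℝ≥0∞,
        (∑' ξ : V, (v ξ * ∑' η : {η : V // ∃ n : ℕ, parent^[n] ξ = η}, g (η : V) * f (η : V)) ^ q)
            ^ (1/q)
          ≤ ENNReal.ofReal C * M * (∑' ξ : V, f ξ ^ p) ^ (1/p) :=
  stmt5_general root parent hroot depth hdepth0 hdepth p q hp hpq g v a b ha hb hsum
end

section
/- Let u : [1,∞) → (0,∞) be locally absolutely continuous with lim_{t→∞} t·u'(t)/u(t) = 0, and let θ > 0. Then for all sufficiently large s ≥ 1 the equation t^θ·u(t) = s has a unique solution t(s) ≥ 1, and t(s) is asymptotically equal (up to constants depending on θ and u) to s^{1/θ}·φ(s), where φ is some locally absolutely continuous function with lim_{s→∞} s·φ'(s)/φ(s) = 0. -/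
/-!
In logarithmic coordinates `x = log t`, `y = log s` the equation `t ^ θ * u t = s` becomes
`G x = y` with `G x = log (u (exp x)) + θ * x`. Applying the product rule for absolutely
continuous functions to `u t * t ^ (∓ε)` shows that `t * u' t / u t → 0` forces `G` to have
asymptotic slope `θ`: eventually `|G y - G x - θ (y - x)| ≤ ε (y - x)` for `x ≤ y`. Hence `G` is
eventually strictly increasing and its inverse `ℓ` has asymptotic slope `θ⁻¹`, so
`L y = ℓ y - y / θ` has asymptotic slope `0`. The average `H y = ∫ z in y..y+1, L z` is then
differentiable with `H' y = L (y + 1) - L y → 0` and `H - L → 0`, and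
`φ s = exp (H (log s))` satisfies `t(s) = s ^ (1/θ) * exp (L (log s)) ≍ s ^ (1/θ) * φ s`.
-/

open MeasureTheory Filter Set Real Topology

theorem mul_rpow_neg_le_of_le_mul_deriv {f f' : ℝ → ℝ} {a b c : ℝ} (ha : 0 < a) (hab : a ≤ b)
    (hf' : IntervalIntegrable f' volume a b) (hf : ∀ x ∈ Icc a b, f x = f a + ∫ t in a..x, f' t)
    (h : ∀ x ∈ Icc a b, c * f x ≤ x * f' x) : f a * a ^ (-c) ≤ f b * b ^ (-c) := by
  set F : ℝ → ℝ := fun x => f a + ∫ t in a..x, f' t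
  have hF : AbsolutelyContinuousOnInterval F a b :=
    contDiffOn_const.absolutelyContinuousOnInterval.add
      (hf'.absolutelyContinuousOnInterval_intervalIntegral left_mem_uIcc)
  have hg : AbsolutelyContinuousOnInterval (· ^ (-c)) a b := by
    refine ContDiffOn.absolutelyContinuousOnInterval fun x hx => ?_
    rw [uIcc_of_le hab] at hx
    exact (Real.contDiffAt_rpow_const_of_ne (ha.trans_le hx.1).ne').contDiffWithinAt
  have hnonneg : 0 ≤ ∫ x in a..b, deriv F x * x ^ (-c) + F x * deriv (· ^ (-c)) x := by
    refine intervalIntegral.integral_nonneg_of_ae_restrict hab ?_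
    filter_upwards [ae_restrict_mem measurableSet_Icc,
      ae_restrict_of_ae hf'.ae_hasDerivAt_integral] with x hx hderiv
    have hx0 : 0 < x := ha.trans_le hx.1
    have hFx : HasDerivAt F (f' x) x :=
      (hderiv (by rwa [uIcc_of_le hab]) a left_mem_uIcc).const_add _
    have hFf : F x = f x := (hf x hx).symm
    rw [Pi.zero_apply, hFx.deriv, (Real.hasDerivAt_rpow_const (Or.inl hx0.ne')).deriv, hFf,
      Real.rpow_sub_one hx0.ne']
    have e : f' x * x ^ (-c) + f x * (-c * (x ^ (-c) / x)) =
        x ^ (-c) / x * (x * f' x - c * f x) := by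
      field_simp; ring
    rw [e]
    exact mul_nonneg (by positivity) (sub_nonneg.2 (h x hx))
  rw [hF.integral_deriv_mul_eq_sub hg, show F b = f b from (hf b (right_mem_Icc.2 hab)).symm,
    show F a = f a by simp [F]] at hnonneg
  linarith

theorem abs_log_sub_log_le_of_abs_mul_deriv_le {f f' : ℝ → ℝ} {a b ε : ℝ} (ha : 0 < a)
    (hab : a ≤ b) (hf' : IntervalIntegrable f' volume a b)
    (hf : ∀ x ∈ Icc a b, f x = f a + ∫ t in a..x, f' t) (hpos : ∀ x ∈ Icc a b, 0 < f x)
    (h : ∀ x ∈ Icc a b, |x * f' x| ≤ ε * f x) :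
    |log (f b) - log (f a)| ≤ ε * (log b - log a) := by
  have hb : 0 < b := ha.trans_le hab
  have hfa := hpos a (left_mem_Icc.2 hab)
  have hfb := hpos b (right_mem_Icc.2 hab)
  have hlow := mul_rpow_neg_le_of_le_mul_deriv (c := -ε) ha hab hf' hf fun x hx => by
    linarith [(abs_le.1 (h x hx)).1]
  have hup := mul_rpow_neg_le_of_le_mul_deriv (f := -f) (f' := -f') (c := ε) ha hab hf'.neg
    (fun x hx => by
      simp only [Pi.neg_apply, hf x hx, intervalIntegral.integral_neg]; ring)
    fun x hx => by simp only [Pi.neg_apply]; linarith [(abs_le.1 (h x hx)).2]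
  simp only [neg_neg, Pi.neg_apply, neg_mul, neg_le_neg_iff] at hlow hup
  have hlow' := log_le_log (by positivity) hlow
  have hup' := log_le_log (by positivity) hup
  rw [log_mul hfa.ne' (by positivity), log_mul hfb.ne' (by positivity), log_rpow ha,
    log_rpow hb] at hlow' hup'
  rw [abs_le]
  constructor <;> linarith

theorem eq_add_integral_of_le {f f' : ℝ → ℝ} {a b x : ℝ}
    (hf : ∀ x ≥ a, f x = f a + ∫ t in a..x, f' t)
    (hf' : ∀ x ≥ a, IntervalIntegrable f' volume a x) (hab : a ≤ b) (hbx : b ≤ x) :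
    f x = f b + ∫ t in b..x, f' t := by
  rw [hf x (hab.trans hbx), hf b hab, add_assoc,
    intervalIntegral.integral_add_adjacent_intervals (hf' b hab) ((hf' b hab).symm.trans
      (hf' x (hab.trans hbx)))]

theorem continuousOn_Ici_of_eq_add_integral {f f' : ℝ → ℝ} {a : ℝ}
    (hf : ∀ x ≥ a, f x = f a + ∫ t in a..x, f' t)
    (hf' : ∀ x ≥ a, IntervalIntegrable f' volume a x) : ContinuousOn f (Ici a) := by
  intro x hx
  have hprim := intervalIntegral.continuousOn_primitive_interval' (hf' (x + 1) (by
    simp only [mem_Ici] at hx; linarith)) left_mem_uIcc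
  rw [uIcc_of_le (by simp only [mem_Ici] at hx; linarith)] at hprim
  refine ((continuousOn_const.add hprim).continuousWithinAt ⟨hx, by linarith⟩
    |>.mono_of_mem_nhdsWithin ?_).congr (fun y hy => hf y hy) (hf x hx)
  rw [← Ici_inter_Iic]
  exact inter_mem_nhdsWithin _ (Iic_mem_nhds (by linarith))

def HasAsymptoticSlope (F : ℝ → ℝ) (c : ℝ) : Prop :=
  ∀ ε > 0, ∀ᶠ x in atTop, ∀ y ≥ x, |F y - F x - c * (y - x)| ≤ ε * (y - x)

theorem ContinuousOn.eventually_lt_of_apply_eq {F : ℝ → ℝ} {a : ℝ} (hF : ContinuousOn F (Ici a))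
    (X : ℝ) : ∀ᶠ y in atTop, ∀ x ≥ a, F x = y → X < x := by
  obtain ⟨M, hM⟩ := isCompact_Icc.bddAbove_image (hF.mono (Icc_subset_Ici_self : Icc a X ⊆ Ici a))
  filter_upwards [eventually_gt_atTop M] with y hy x hx hxy
  by_contra! h
  exact (hM ⟨x, ⟨hx, h⟩, rfl⟩).not_gt (hxy ▸ hy)

namespace HasAsymptoticSlope

variable {F G : ℝ → ℝ} {c : ℝ}

theorem congr (hF : HasAsymptoticSlope F c) (hFG : F =ᶠ[atTop] G) : HasAsymptoticSlope G c := by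
  intro ε hε
  filter_upwards [hF ε hε, eventually_forall_ge_atTop.2 hFG] with x hx hFGx y hxy
  rw [← hFGx x le_rfl, ← hFGx y hxy]
  exact hx y hxy

theorem add_linear (hF : HasAsymptoticSlope F c) (d : ℝ) :
    HasAsymptoticSlope (fun x => F x + d * x) (c + d) := by
  intro ε hε
  filter_upwards [hF ε hε] with x hx y hxy
  convert hx y hxy using 2
  ring

theorem exists_continuous_eventuallyEq (hF : HasAsymptoticSlope F c) :
    ∃ G, Continuous G ∧ G =ᶠ[atTop] F := by
  obtain ⟨X, hX⟩ := eventually_atTop.1 (hF 1 one_pos)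
  have hlip : LipschitzOnWith (Real.toNNReal (|c| + 1)) F (Ici X) := by
    have hbound : ∀ x ∈ Ici X, ∀ y ≥ x, |F y - F x| ≤ (|c| + 1) * (y - x) := by
      intro x hx y hxy
      have h := hX x hx y hxy
      have : |c * (y - x)| = |c| * (y - x) := by rw [abs_mul, abs_of_nonneg (sub_nonneg.2 hxy)]
      have := abs_add_le (F y - F x - c * (y - x)) (c * (y - x))
      simp only [sub_add_cancel] at this
      linarith
    refine LipschitzOnWith.of_dist_le_mul fun x hx y hy => ?_
    rw [Real.coe_toNNReal _ (by positivity), Real.dist_eq, Real.dist_eq]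
    rcases le_total x y with hxy | hxy
    · rw [abs_sub_comm, abs_sub_comm x, abs_of_nonneg (sub_nonneg.2 hxy)]
      exact hbound x hx y hxy
    · rw [abs_of_nonneg (sub_nonneg.2 hxy)]
      exact hbound y hy x hxy
  refine ⟨fun x => F (max x X), hlip.continuousOn.comp_continuous (by fun_prop)
    fun x => le_max_right x X, ?_⟩
  filter_upwards [eventually_ge_atTop X] with x hx
  rw [max_eq_left hx]

theorem exists_strictMonoOn (hF : HasAsymptoticSlope F c) (hc : 0 < c) :
    ∃ X, StrictMonoOn F (Ici X) := by
  obtain ⟨X, hX⟩ := eventually_atTop.1 (hF (c / 2) (half_pos hc))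
  refine ⟨X, fun x hx y _ hxy => ?_⟩
  have h := (abs_le.1 (hX x hx y hxy.le)).1
  nlinarith

theorem tendsto_atTop (hF : HasAsymptoticSlope F c) (hc : 0 < c) : Tendsto F atTop atTop := by
  obtain ⟨X, hX⟩ := eventually_atTop.1 (hF (c / 2) (half_pos hc))
  refine tendsto_atTop_mono' atTop ?_
    (tendsto_atTop_add_const_left _ (F X - c / 2 * X) (tendsto_id.const_mul_atTop (half_pos hc)))
  filter_upwards [eventually_ge_atTop X] with y hy
  have h := (abs_le.1 (hX X le_rfl y hy)).1
  rw [id]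
  linarith

theorem inverse {ℓ : ℝ → ℝ} (hF : HasAsymptoticSlope F c) (hc : 0 < c)
    (hℓ : Tendsto ℓ atTop atTop) (hinv : ∀ᶠ y in atTop, F (ℓ y) = y) :
    HasAsymptoticSlope ℓ c⁻¹ := by
  intro ε hε
  -- With `d = ℓ y' - ℓ y`: `|d - c⁻¹ (y' - y)| ≤ δ d / c` and `c d ≤ 2 (y' - y)` once `δ ≤ c / 2`.
  set δ := min (c / 2) (ε * c ^ 2 / 2)
  have hδ : 0 < δ := lt_min (half_pos hc) (by positivity)
  have hδc : δ ≤ c / 2 := min_le_left _ _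
  have hδε : δ ≤ ε * c ^ 2 / 2 := min_le_right _ _
  obtain ⟨X, hX⟩ := eventually_atTop.1 (hF δ hδ)
  filter_upwards [eventually_forall_ge_atTop.2 ((hℓ.eventually_ge_atTop X).and hinv)]
    with y hy y' hyy'
  obtain ⟨hXy, hFy⟩ := hy y le_rfl
  obtain ⟨hXy', hFy'⟩ := hy y' hyy'
  have hmono : ℓ y ≤ ℓ y' := by
    by_contra! h
    have := (abs_le.1 (hX _ hXy' _ h.le)).1
    nlinarith
  have h := hX _ hXy _ hmono
  rw [hFy, hFy'] at h
  set d := ℓ y' - ℓ y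
  have hd : 0 ≤ d := sub_nonneg.2 hmono
  have hcd : c * d ≤ 2 * (y' - y) := by nlinarith [(abs_le.1 h).1]
  have e : ℓ y' - ℓ y - c⁻¹ * (y' - y) = -c⁻¹ * (y' - y - c * d) := by
    field_simp; ring
  rw [e, abs_mul, abs_neg, abs_inv, abs_of_pos hc, inv_mul_le_iff₀ hc]
  calc |y' - y - c * d| ≤ δ * d := h
    _ ≤ ε * c ^ 2 / 2 * d := mul_le_mul_of_nonneg_right hδε hd
    _ = ε * c / 2 * (c * d) := by ring
    _ ≤ ε * c / 2 * (2 * (y' - y)) := mul_le_mul_of_nonneg_left hcd (by positivity)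
    _ = c * (ε * (y' - y)) := by ring

theorem exists_inverse (hF : HasAsymptoticSlope F c) (hc : 0 < c) {a : ℝ}
    (hcont : ContinuousOn F (Ici a)) :
    ∃ ℓ : ℝ → ℝ, Tendsto ℓ atTop atTop ∧
      ∀ᶠ y in atTop, a ≤ ℓ y ∧ F (ℓ y) = y ∧ ∀ x ≥ a, F x = y → x = ℓ y := by
  have hsol : ∀ᶠ y in atTop, ∃ x ≥ a, F x = y := by
    filter_upwards [eventually_ge_atTop (F a)] with y hy
    exact intermediate_value_Ici hcont (hF.tendsto_atTop hc) hy
  classical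
  let ℓ y := if h : ∃ x ≥ a, F x = y then h.choose else a
  have hℓ : ∀ᶠ y in atTop, a ≤ ℓ y ∧ F (ℓ y) = y := by
    filter_upwards [hsol] with y h
    simp only [ℓ, dif_pos h]
    exact h.choose_spec
  have hgt : ∀ X, ∀ᶠ y in atTop, X < ℓ y := fun X => by
    filter_upwards [hℓ, hcont.eventually_lt_of_apply_eq X] with y h hsolX
    exact hsolX _ h.1 h.2
  obtain ⟨X, hX⟩ := hF.exists_strictMonoOn hc
  refine ⟨ℓ, Filter.tendsto_atTop.2 fun X => (hgt X).mono fun _ => le_of_lt, ?_⟩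
  filter_upwards [hℓ, hgt X, hcont.eventually_lt_of_apply_eq X] with y ⟨ha, hy⟩ hXy hsolX
  exact ⟨ha, hy, fun x hx hxy => hX.injOn (hsolX x hx hxy).le hXy.le (hxy.trans hy.symm)⟩

theorem exists_differentiable_approx {L : ℝ → ℝ} (hL : HasAsymptoticSlope L 0) :
    ∃ H H' : ℝ → ℝ, Continuous H' ∧ (∀ y, HasDerivAt H (H' y) y) ∧
      Tendsto H' atTop (𝓝 0) ∧ Tendsto (fun y => L y - H y) atTop (𝓝 0) := by
  obtain ⟨L₀, hL₀, hL₀L⟩ := hL.exists_continuous_eventuallyEq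
  have hosc : ∀ ε > 0, ∀ᶠ y in atTop, ∀ z ∈ Icc y (y + 1), |L₀ z - L₀ y| ≤ ε := by
    intro ε hε
    filter_upwards [hL.congr hL₀L.symm ε hε] with y hy z hz
    have := hy z hz.1
    rw [zero_mul, sub_zero] at this
    nlinarith [hz.2]
  have hQ : ∀ y, HasDerivAt (fun y => ∫ z in (0 : ℝ)..y, L₀ z) (L₀ y) y := fun y =>
    (hL₀.integral_hasStrictDerivAt 0 y).hasDerivAt
  refine ⟨fun y => ∫ z in y..y + 1, L₀ z, fun y => L₀ (y + 1) - L₀ y, by fun_prop,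
    fun y => ?_, ?_, ?_⟩
  · have hH : (fun y => ∫ z in y..y + 1, L₀ z) =
        fun y => (∫ z in (0 : ℝ)..y + 1, L₀ z) - ∫ z in (0 : ℝ)..y, L₀ z := funext fun y =>
      (intervalIntegral.integral_interval_sub_left (hL₀.intervalIntegrable _ _)
        (hL₀.intervalIntegrable _ _)).symm
    rw [hH]
    exact ((hQ (y + 1)).comp_add_const y 1).sub (hQ y)
  · refine Metric.tendsto_nhds.2 fun ε hε => ?_
    filter_upwards [hosc (ε / 2) (half_pos hε)] with y hy
    rw [Real.dist_eq, sub_zero]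
    exact (hy (y + 1) ⟨by linarith, le_rfl⟩).trans_lt (half_lt_self hε)
  · refine Metric.tendsto_nhds.2 fun ε hε => ?_
    filter_upwards [hosc (ε / 2) (half_pos hε), hL₀L] with y hy hLy
    have hint : L y - ∫ z in y..y + 1, L₀ z = ∫ z in y..y + 1, (L₀ y - L₀ z) := by
      rw [intervalIntegral.integral_sub intervalIntegrable_const (hL₀.intervalIntegrable _ _)]
      simp [hLy]
    have hbound : ‖∫ z in y..y + 1, (L₀ y - L₀ z)‖ ≤ ε / 2 * |y + 1 - y| := by
      refine intervalIntegral.norm_integral_le_of_norm_le_const fun z hz => ?_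
      rw [uIoc_of_le (by linarith)] at hz
      rw [Real.norm_eq_abs, abs_sub_comm]
      exact hy z (Ioc_subset_Icc_self hz)
    rw [Real.dist_eq, sub_zero, hint, ← Real.norm_eq_abs]
    rw [add_sub_cancel_left, abs_one, mul_one] at hbound
    exact hbound.trans_lt (half_lt_self hε)

theorem exists_slowlyVarying {L : ℝ → ℝ} (hL : HasAsymptoticSlope L 0) :
    ∃ φ φ' : ℝ → ℝ, (∀ s, 0 < φ s) ∧ (∀ s > 0, HasDerivAt φ (φ' s) s) ∧
      ContinuousOn φ' (Ioi 0) ∧ Tendsto (fun s => s * φ' s / φ s) atTop (𝓝 0) ∧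
      Tendsto (fun s => L (log s) - log (φ s)) atTop (𝓝 0) := by
  obtain ⟨H, H', hH'c, hH, hH'lim, hLH⟩ := hL.exists_differentiable_approx
  have hHc : Continuous H := continuous_iff_continuousAt.2 fun y => (hH y).continuousAt
  refine ⟨fun s => exp (H (log s)), fun s => exp (H (log s)) * (H' (log s) * s⁻¹),
    fun s => exp_pos _, fun s hs => ((hH _).comp s (hasDerivAt_log hs.ne')).exp, ?_, ?_, ?_⟩
  · have hlog : ContinuousOn log (Ioi 0) := continuousOn_log.mono fun _ hs => ne_of_gt hs
    exact (hHc.comp_continuousOn hlog).rexp.mul ((hH'c.comp_continuousOn hlog).mul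
      (continuousOn_inv₀.mono fun _ hs => ne_of_gt hs))
  · refine (hH'lim.comp tendsto_log_atTop).congr' ?_
    filter_upwards [eventually_gt_atTop 0] with s hs
    field_simp
    rfl
  · simpa [Function.comp_def] using hLH.comp tendsto_log_atTop

end HasAsymptoticSlope

theorem hasAsymptoticSlope_log_comp_exp {u u' : ℝ → ℝ} {a : ℝ} (hpos : ∀ t ≥ a, 0 < u t)
    (hftc : ∀ t ≥ a, u t = u a + ∫ s in a..t, u' s)
    (hint : ∀ t ≥ a, IntervalIntegrable u' volume a t)
    (hlim : Tendsto (fun t => t * u' t / u t) atTop (𝓝 0)) :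
    HasAsymptoticSlope (fun x => log (u (exp x))) 0 := by
  intro ε hε
  have hev : ∀ᶠ t in atTop, a ≤ t ∧ |t * u' t| ≤ ε * u t := by
    filter_upwards [Metric.tendsto_nhds.1 hlim ε hε, eventually_ge_atTop a] with t ht hat
    rw [Real.dist_eq, sub_zero, abs_div, abs_of_pos (hpos t hat), div_lt_iff₀ (hpos t hat)] at ht
    exact ⟨hat, ht.le⟩
  filter_upwards [tendsto_exp_atTop.eventually (eventually_forall_ge_atTop.2 hev)] with x hx y hxy
  have hexy : exp x ≤ exp y := exp_le_exp.2 hxy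
  have hax := (hx _ le_rfl).1
  simpa using abs_log_sub_log_le_of_abs_mul_deriv_le (exp_pos x) hexy
    ((hint _ hax).symm.trans (hint _ (hax.trans hexy)))
    (fun z hz => eq_add_integral_of_le hftc hint hax hz.1)
    (fun z hz => hpos z (hax.trans hz.1)) fun z hz => (hx z hz.1).2

theorem rpow_mul_eq_iff_log_add_mul_log_eq {t v s θ : ℝ} (ht : 0 < t) (hv : 0 < v) (hs : 0 < s) :
    t ^ θ * v = s ↔ log v + θ * log t = log s := by
  have htv : 0 < t ^ θ * v := by positivity
  rw [← log_injOn_pos.eq_iff htv hs, log_mul (rpow_pos_of_pos ht θ).ne' hv.ne', log_rpow ht]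
  constructor <;> intro h <;> linarith

theorem exists_solution_rpow_mul_eq {u u' : ℝ → ℝ} {θ : ℝ} (hθ : 0 < θ) (hpos : ∀ t ≥ (1 : ℝ), 0 < u t)
    (hftc : ∀ t ≥ (1 : ℝ), u t = u 1 + ∫ s in (1 : ℝ)..t, u' s)
    (hint : ∀ t ≥ (1 : ℝ), IntervalIntegrable u' volume 1 t)
    (hlim : Tendsto (fun t => t * u' t / u t) atTop (𝓝 0)) :
    ∃ ℓ : ℝ → ℝ, HasAsymptoticSlope ℓ θ⁻¹ ∧ ∀ᶠ s in atTop,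
      1 ≤ exp (ℓ (log s)) ∧ exp (ℓ (log s)) ^ θ * u (exp (ℓ (log s))) = s ∧
        ∀ t' : ℝ, 1 ≤ t' → t' ^ θ * u t' = s → t' = exp (ℓ (log s)) := by
  set G : ℝ → ℝ := fun x => log (u (exp x)) + θ * x
  have hG : HasAsymptoticSlope G θ := by
    simpa using (hasAsymptoticSlope_log_comp_exp hpos hftc hint hlim).add_linear θ
  have hGcont : ContinuousOn G (Ici 0) :=
    (((continuousOn_Ici_of_eq_add_integral hftc hint).comp continuous_exp.continuousOn
      fun _ hx => one_le_exp hx).log fun _ hx => (hpos _ (one_le_exp hx)).ne').add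
      (continuousOn_const.mul continuousOn_id)
  obtain ⟨ℓ, hℓtop, hℓ⟩ := hG.exists_inverse hθ hGcont
  refine ⟨ℓ, hG.inverse hθ hℓtop (hℓ.mono fun _ h => h.2.1), ?_⟩
  filter_upwards [tendsto_log_atTop.eventually hℓ, eventually_gt_atTop 0] with s ⟨h0, hGs, huniq⟩ hs
  have hsol : ∀ t ≥ (1 : ℝ), t ^ θ * u t = s ↔ G (log t) = log s := fun t ht => by
    rw [rpow_mul_eq_iff_log_add_mul_log_eq (by linarith) (hpos t ht) hs]
    simp only [G, exp_log (by linarith : (0 : ℝ) < t)]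
  refine ⟨one_le_exp h0, (hsol _ (one_le_exp h0)).2 (by rwa [log_exp]), fun t ht h => ?_⟩
  rw [← huniq (log t) (log_nonneg ht) ((hsol t ht).1 h), exp_log (by linarith)]

theorem exp_bounds_of_abs_sub_log_le {A B : ℝ} (hB : 0 < B) (h : |A - log B| ≤ 1) :
    exp (-1) * B ≤ exp A ∧ exp A ≤ exp 1 * B := by
  rw [abs_le] at h
  rw [← exp_log hB, ← exp_add, ← exp_add]
  exact ⟨exp_le_exp.2 (by linarith), exp_le_exp.2 (by linarith)⟩

theorem stmt6 (u u' : ℝ → ℝ) (θ : ℝ) (hθ : 0 < θ)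
    (hpos : ∀ t ≥ (1:ℝ), 0 < u t)
    (hftc : ∀ t ≥ (1:ℝ), u t = u 1 + ∫ s in (1:ℝ)..t, u' s)
    (hint : ∀ t ≥ (1:ℝ), IntervalIntegrable u' volume 1 t)
    (hlim : Tendsto (fun t => t * u' t / u t) atTop (nhds 0)) :
    ∃ s₀ ≥ (1:ℝ), ∃ t : ℝ → ℝ, ∃ φ φ' : ℝ → ℝ, ∃ c₁ > (0:ℝ), ∃ c₂ > (0:ℝ),
      (∀ s ≥ s₀, 1 ≤ t s ∧ t s ^ θ * u (t s) = s ∧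
        ∀ t' : ℝ, 1 ≤ t' → t' ^ θ * u t' = s → t' = t s) ∧
      (∀ s ≥ s₀, 0 < φ s) ∧
      (∀ s ≥ s₀, φ s = φ s₀ + ∫ x in s₀..s, φ' x) ∧
      (∀ s ≥ s₀, IntervalIntegrable φ' volume s₀ s) ∧
      Tendsto (fun s => s * φ' s / φ s) atTop (nhds 0) ∧
      ∀ s ≥ s₀, c₁ * s ^ (1/θ) * φ s ≤ t s ∧ t s ≤ c₂ * s ^ (1/θ) * φ s := by
  obtain ⟨ℓ, hℓ, hsol⟩ := exists_solution_rpow_mul_eq hθ hpos hftc hint hlim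
  have hL : HasAsymptoticSlope (fun y => ℓ y + -θ⁻¹ * y) 0 := by
    simpa using hℓ.add_linear (-θ⁻¹)
  obtain ⟨φ, φ', hφpos, hφ', hφ'cont, hφlim, hφapprox⟩ := hL.exists_slowlyVarying
  obtain ⟨s₀, hs₀⟩ := eventually_atTop.1 (hsol.and ((hφapprox.abs.eventually
    (eventually_le_nhds (by simp : |(0 : ℝ)| < 1))).and (eventually_ge_atTop 1)))
  have hs₀1 : 1 ≤ s₀ := (hs₀ s₀ le_rfl).2.2
  have hint' : ∀ s ≥ s₀, IntervalIntegrable φ' volume s₀ s := fun s hs =>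
    (hφ'cont.mono fun x hx => (by linarith [hx.1] : (0 : ℝ) < x)).intervalIntegrable_of_Icc hs
  refine ⟨s₀, hs₀1, fun s => exp (ℓ (log s)), φ, φ', exp (-1), exp_pos _, exp 1, exp_pos _,
    fun s hs => (hs₀ s hs).1, fun s _ => hφpos s, fun s hs => ?_, hint', hφlim, fun s hs => ?_⟩
  · rw [intervalIntegral.integral_eq_sub_of_hasDerivAt (fun x hx => hφ' x ?_) (hint' s hs)]
    · ring
    · rw [uIcc_of_le hs] at hx
      linarith [hx.1]
  · have hs0 : 0 < s := by linarith
    simpa only [mul_assoc] using exp_bounds_of_abs_sub_log_le (A := ℓ (log s))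
      (B := s ^ (1 / θ) * φ s) (by have := hφpos s; positivity) (by
        have h := (hs₀ s hs).2.1
        rw [abs_le] at h
        rw [log_mul (by positivity) (hφpos s).ne', log_rpow hs0, one_div, abs_le]
        constructor <;> linarith [h.1, h.2])
end

section
/- Let 0 < η < 1, T > 0, and λ_i ≥ 1 (i = 1,…,d−1), λ_d = 1. Define V_λ = ⋃_{0<t≤T}(−t e_d + ∏_{i=1}^d[−t^{λ_i}η, t^{λ_i}η]), Π = ∏_{i=1}^{d−1}(−T^{λ_i}η/5, T^{λ_i}η/5), and suppose U ⊂ ∏_{i=1}^d(−T^{λ_i}η/10, T^{λ_i}η/10). Set M₋ = inf{ξ_d − T − Tη : ξ ∈ U} and M₊ = sup{ξ_d − T − Tη : ξ ∈ U}. Then M₊ − M₋ ≤ Tη/5 and Π × (M₋, M₊] ⊂ {(x',x_d) ∈ U + V_λ : x' ∈ Π}. -/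
theorem stmt16 (n : ℕ) (hn : 1 ≤ n) (η T : ℝ) (hη : 0 < η) (hη1 : η < 1) (hT : 0 < T)
    (lam : Fin n → ℝ) (hlam : ∀ i, 1 ≤ lam i)
    (V : Set ((Fin n → ℝ) × ℝ))
    (hV : V = {p | ∃ t ∈ Set.Ioc 0 T, (∀ i, |p.1 i| ≤ t ^ lam i * η) ∧ |p.2 + t| ≤ t * η})
    (Pi' : Set (Fin n → ℝ))
    (hPi : Pi' = {x' | ∀ i, |x' i| < T ^ lam i * η / 5})
    (U : Set ((Fin n → ℝ) × ℝ)) (hUne : U.Nonempty)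
    (hU : U ⊆ {p | (∀ i, |p.1 i| < T ^ lam i * η / 10) ∧ |p.2| < T * η / 10})
    (Mm Mp : ℝ)
    (hMm : Mm = sInf ((fun ξ : (Fin n → ℝ) × ℝ => ξ.2 - T - T * η) '' U))
    (hMp : Mp = sSup ((fun ξ : (Fin n → ℝ) × ℝ => ξ.2 - T - T * η) '' U)) :
    Mp - Mm ≤ T * η / 5 ∧
    ∀ x' ∈ Pi', ∀ c : ℝ, Mm < c → c ≤ Mp →
      ∃ u ∈ U, ∃ w ∈ V, ((x', c) : (Fin n → ℝ) × ℝ) = u + w := by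
  have key : ∀ ξ ∈ U, -T - 11*(T*η)/10 < ξ.2 - T - T*η ∧ ξ.2 - T - T*η < -T - 9*(T*η)/10 := by
    intro ξ hξ
    have h := (hU hξ).2
    rw [abs_lt] at h
    constructor <;> linarith [h.1, h.2]
  set S := (fun ξ : (Fin n → ℝ) × ℝ => ξ.2 - T - T * η) '' U with hS
  have hSne : S.Nonempty := hUne.image _
  have hSub : ∀ s ∈ S, s ≤ -T - 9*(T*η)/10 := by
    rintro s ⟨ξ, hξ, rfl⟩; exact le_of_lt (key ξ hξ).2
  have hSlb : ∀ s ∈ S, -T - 11*(T*η)/10 ≤ s := by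
    rintro s ⟨ξ, hξ, rfl⟩; exact le_of_lt (key ξ hξ).1
  have hMp' : Mp ≤ -T - 9*(T*η)/10 := by rw [hMp]; exact csSup_le hSne hSub
  have hMm' : -T - 11*(T*η)/10 ≤ Mm := by rw [hMm]; exact le_csInf hSne hSlb
  refine ⟨by linarith, ?_⟩
  intro x' hx' c hcM hcP
  obtain ⟨s, hsS, hs⟩ : ∃ s ∈ S, s < c := exists_lt_of_csInf_lt hSne (hMm ▸ hcM)
  obtain ⟨ξ, hξU, rfl⟩ := hsS
  refine ⟨ξ, hξU, ⟨(x' - ξ.1, c - ξ.2), ?_, ?_⟩⟩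
  · rw [hV]
    refine ⟨T, ⟨hT, le_refl T⟩, ?_, ?_⟩
    · intro i
      have hT1 : |ξ.1 i| < T ^ lam i * η / 10 := (hU hξU).1 i
      have hx : |x' i| < T ^ lam i * η / 5 := by rw [hPi] at hx'; exact hx' i
      have h0 := abs_nonneg (ξ.1 i)
      calc |(x' - ξ.1) i| = |x' i - ξ.1 i| := by simp
        _ ≤ |x' i| + |ξ.1 i| := abs_sub (x' i) (ξ.1 i)
        _ ≤ T ^ lam i * η := by linarith
    · have h2 : c ≤ Mp := hcP
      have hξ2 : |ξ.2| < T * η / 10 := (hU hξU).2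
      simp only at hs
      rw [abs_lt] at hξ2
      simp only [abs_le]
      constructor <;> [linarith [hξ2.2]; linarith [hξ2.1]]
  · have : ξ + ((x' - ξ.1, c - ξ.2) : (Fin n → ℝ) × ℝ) = (x', c) := by
      ext <;> simp
    rw [this]
end
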